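/- arXiv:0808.1502 — 2 statements merged into one kernel-verified Lean document; each statement's English description precedes it below -/
import Mathlib

section
/- Let (X_{i,j})_{i,j≥1} be an infinite array of i.i.d. nonnegative real random variables with mean E(X_{1,1}) = 1 and finite positive variance σ². Let ς_n := ∫ t² dν_{√n M}(t) = (1/n) Σ_{i=1}^n s_i(√n M)² = Σ_{i=1}^n (X_{i,1}² + ⋯ + X_{i,n}²)/(X_{i,1} + ⋯ + X_{i,n})² be the second moment of the empirical singular value distribution of √n M. Then almost surely limsup_{n→∞} ς_n ≤ 1 + σ². -/
open MeasureTheory ProbabilityTheory Filter Matrix Polynomial Topology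
open scoped ENNReal

noncomputable section

/-- Unsorted singular values of `A`: the square roots of the eigenvalues of `A * Aᴴ`. -/
def singVals {n : ℕ} (A : Matrix (Fin n) (Fin n) ℂ) : Fin n → ℝ :=
  fun i => Real.sqrt ((Matrix.isHermitian_mul_conjTranspose_self A).eigenvalues i)

/-- The singular values of `A` sorted in nonincreasing order. -/
def sdesc {n : ℕ} (A : Matrix (Fin n) (Fin n) ℂ) : Fin n → ℝ :=
  fun i => (singVals A ∘ Tuple.sort (singVals A)) i.rev

/-- `sv A k` is the `(k+1)`-th largest singular value `s_{k+1}(A)` of `A`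
(i.e. 0-based indexing: `sv A 0 = s₁(A)`, …, `sv A (n-1) = sₙ(A)`), junk value `0` out of range. -/
def sv {n : ℕ} (A : Matrix (Fin n) (Fin n) ℂ) (k : ℕ) : ℝ :=
  if h : k < n then sdesc A ⟨k, h⟩ else 0

/-- Empirical singular value distribution `ν_A`. -/
def empSV {n : ℕ} (A : Matrix (Fin n) (Fin n) ℂ) : Measure ℝ :=
  (n : ℝ≥0∞)⁻¹ • ∑ i : Fin n, Measure.dirac (singVals A i)

/-- Empirical eigenvalue distribution `μ_A`: uniform measure on the roots (with multiplicity)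
of the characteristic polynomial of `A`. -/
def empEig {n : ℕ} (A : Matrix (Fin n) (Fin n) ℂ) : Measure ℂ :=
  (n : ℝ≥0∞)⁻¹ • ((A.charpoly.roots.map Measure.dirac).sum)

variable {Ω : Type} [MeasurableSpace Ω]

/-- The random `n×n` Markov matrix `M` built from the array `X`:
`M i j = X i j / (row sum)` when the row sum is positive, and `M i j = δ_{ij}` otherwise. -/
def markov (X : ℕ → ℕ → Ω → ℝ) (n : ℕ) (ω : Ω) : Matrix (Fin n) (Fin n) ℝ :=
  Matrix.of fun i j =>
    if 0 < ∑ k : Fin n, X i k ω then X i j ω / ∑ k : Fin n, X i k ω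
    else if i = j then 1 else 0

/-- The Markov matrix `M`, viewed as a complex matrix. -/
def markC (X : ℕ → ℕ → Ω → ℝ) (n : ℕ) (ω : Ω) : Matrix (Fin n) (Fin n) ℂ :=
  (markov X n ω).map (fun x => (x : ℂ))

/-- The matrix `√n M`, viewed as a complex matrix. -/
def sqnM (X : ℕ → ℕ → Ω → ℝ) (n : ℕ) (ω : Ω) : Matrix (Fin n) (Fin n) ℂ :=
  (Real.sqrt n : ℂ) • markC X n ω

/-- The matrix `n^{-1/2} X`, viewed as a complex matrix. -/
def sqnX (X : ℕ → ℕ → Ω → ℝ) (n : ℕ) (ω : Ω) : Matrix (Fin n) (Fin n) ℂ :=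
  ((Real.sqrt n : ℂ))⁻¹ • Matrix.of (fun i j : Fin n => (X i j ω : ℂ))


/-!
Write `ς_n = ∑ᵢ qᵢ / sᵢ²` with `qᵢ = ∑ⱼ X i j ^ 2` and `sᵢ = ∑ⱼ X i j`. By the strong law of
large numbers applied to the `n²` entries of the square block, `n⁻² ∑ᵢ qᵢ → E X² = 1 + σ²` a.s.
A Chernoff bound, based on `exp (-u) ≤ 1 - u + u²` for `u ≥ 0`, gives
`P(sᵢ ≤ (1 - ε) n) ≤ rⁿ` with `r < 1`; since `∑ n rⁿ < ∞`, Borel–Cantelli shows that a.s.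
eventually all `n` row sums exceed `(1 - ε) n`. Then `ς_n ≤ n⁻² ∑ᵢ qᵢ / (1 - ε)²`, so
`limsup ς_n ≤ (1 + σ²) / (1 - ε)²` for every `ε > 0`.
-/

open Finset Real

theorem Nat.pair_lt_sq_iff {a b n : ℕ} : Nat.pair a b < n ^ 2 ↔ a < n ∧ b < n := by
  refine ⟨fun h => max_lt_iff.1 ?_, fun ⟨ha, hb⟩ => ?_⟩
  · exact (Nat.pow_lt_pow_iff_left two_ne_zero).1
      ((Nat.le_add_right _ _).trans (Nat.max_sq_add_min_le_pair a b) |>.trans_lt h)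
  · exact (Nat.pair_lt_max_add_one_sq a b).trans_le (Nat.pow_le_pow_left (max_lt ha hb) 2)

theorem Nat.sum_range_sq_unpair {M : Type*} [AddCommMonoid M] (f : ℕ → ℕ → M) (n : ℕ) :
    ∑ k ∈ range (n ^ 2), f k.unpair.1 k.unpair.2 = ∑ i ∈ range n, ∑ j ∈ range n, f i j := by
  rw [← Finset.sum_product']
  symm
  refine Finset.sum_nbij' (fun p => Nat.pair p.1 p.2) Nat.unpair (fun p hp => ?_) (fun k hk => ?_)
    (by simp) (by simp) (by simp)
  · simpa [Nat.pair_lt_sq_iff] using hp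
  · simpa [← Nat.pair_lt_sq_iff] using hk

lemma Real.exp_neg_le_one_sub_add_sq {u : ℝ} (hu : 0 ≤ u) : exp (-u) ≤ 1 - u + u ^ 2 := by
  have h := add_one_le_exp u
  have h' : exp (-u) * exp u = 1 := by rw [← exp_add]; simp
  nlinarith [exp_pos (-u)]

variable {μ : Measure Ω}

theorem strong_law_ae_square_array (Z : ℕ → ℕ → Ω → ℝ) (hint : Integrable (Z 0 0) μ)
    (hindep : Pairwise fun p q : ℕ × ℕ => Z p.1 p.2 ⟂ᵢ[μ] Z q.1 q.2)
    (hident : ∀ i j, IdentDistrib (Z i j) (Z 0 0) μ μ) :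
    ∀ᵐ ω ∂μ, Tendsto (fun n : ℕ => (∑ i ∈ range n, ∑ j ∈ range n, Z i j ω) / (n : ℝ) ^ 2)
      atTop (𝓝 (∫ ω, Z 0 0 ω ∂μ)) := by
  set Y : ℕ → Ω → ℝ := fun k => Z k.unpair.1 k.unpair.2
  have hY0 : Y 0 = Z 0 0 := by simp [Y]
  have hslln := strong_law_ae_real Y (hY0 ▸ hint)
    (fun k l hkl => hindep (Nat.pairEquiv.symm.injective.ne hkl)) (fun k => hY0 ▸ hident _ _)
  filter_upwards [hslln] with ω hω
  refine (hω.comp (tendsto_pow_atTop two_ne_zero)).congr fun n => ?_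
  simp [Y, Nat.sum_range_sq_unpair fun i j => Z i j ω]

lemma mgf_neg_le_of_nonneg [IsProbabilityMeasure μ] {X : Ω → ℝ} (hX : ∀ ω, 0 ≤ X ω)
    (hL2 : MemLp X 2 μ) {t : ℝ} (ht : 0 ≤ t) : mgf X μ (-t) ≤ 1 - t * ∫ ω, X ω ∂μ + t ^ 2 * ∫ ω, X ω ^ 2 ∂μ := by
  have hint : Integrable X μ := hL2.integrable one_le_two
  have hlin : Integrable (fun ω => 1 - t * X ω) μ := (integrable_const 1).sub (hint.const_mul t)
  have hquad : Integrable (fun ω => t ^ 2 * X ω ^ 2) μ := hL2.integrable_sq.const_mul _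
  have hexp_int : Integrable (fun ω => exp (-t * X ω)) μ := by
    refine (integrable_const 1).mono' (by fun_prop) (ae_of_all _ fun ω => ?_)
    rw [norm_of_nonneg (exp_pos _).le, exp_le_one_iff]
    nlinarith [hX ω]
  calc mgf X μ (-t) ≤ ∫ ω, (1 - t * X ω + t ^ 2 * X ω ^ 2) ∂μ := by
        refine integral_mono hexp_int ?_ fun ω => ?_
        · exact hlin.add hquad
        · simpa [neg_mul, mul_pow] using exp_neg_le_one_sub_add_sq (mul_nonneg ht (hX ω))
    _ = 1 - t * ∫ ω, X ω ∂μ + t ^ 2 * ∫ ω, X ω ^ 2 ∂μ := by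
        rw [integral_add hlin hquad, integral_sub (integrable_const 1) (hint.const_mul t),
          integral_const_mul, integral_const_mul]
        simp

lemma exists_exp_mul_mgf_neg_lt_one [IsProbabilityMeasure μ] {X : Ω → ℝ} (hX : ∀ ω, 0 ≤ X ω)
    (hL2 : MemLp X 2 μ) (hmean : ∫ ω, X ω ∂μ = 1) {ε : ℝ} (hε : 0 < ε) :
    ∃ t, 0 < t ∧ exp (t * (1 - ε)) * mgf X μ (-t) < 1 := by
  set C := ∫ ω, X ω ^ 2 ∂μ
  have hC : 0 ≤ C := integral_nonneg fun ω => sq_nonneg _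
  set t := ε / (C + 1)
  have ht : 0 < t := div_pos hε (by linarith)
  refine ⟨t, ht, ?_⟩
  have htC : t * C < ε := by
    rw [div_mul_eq_mul_div, div_lt_iff₀ (by positivity)]
    nlinarith
  calc exp (t * (1 - ε)) * mgf X μ (-t) ≤ exp (t * (1 - ε)) * exp (-t + t ^ 2 * C) := by
        gcongr
        calc mgf X μ (-t) ≤ 1 - t * 1 + t ^ 2 * C := hmean ▸ mgf_neg_le_of_nonneg hX hL2 ht.le
          _ ≤ _ := by linarith [add_one_le_exp (-t + t ^ 2 * C)]
    _ = exp (t * (t * C - ε)) := by rw [← exp_add]; ring_nf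
    _ < 1 := exp_lt_one_iff.2 (mul_neg_of_pos_of_neg ht (by linarith))

lemma measureReal_sum_range_le_le_pow {Y : ℕ → Ω → ℝ} {X : Ω → ℝ}
    (hindep : iIndepFun Y μ) (hmeas : ∀ j, Measurable (Y j)) (hnonneg : ∀ j ω, 0 ≤ Y j ω)
    (hident : ∀ j, IdentDistrib (Y j) X μ μ) {t : ℝ} (ht : 0 ≤ t) (a : ℝ) (n : ℕ) :
    μ.real {ω | ∑ j ∈ range n, Y j ω ≤ a * n} ≤ (exp (t * a) * mgf X μ (-t)) ^ n := by
  have := hindep.isProbabilityMeasure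
  have hint : Integrable (fun ω => exp (-t * (∑ j ∈ range n, Y j) ω)) μ := by
    have hS : Measurable (∑ j ∈ range n, Y j) := by
      simpa only [← Finset.sum_apply] using Finset.measurable_sum (range n) fun j _ => hmeas j
    refine (integrable_const 1).mono' (hS.const_mul (-t)).exp.aestronglyMeasurable
      (ae_of_all _ fun ω => ?_)
    rw [norm_of_nonneg (exp_pos _).le, exp_le_one_iff, Finset.sum_apply]
    nlinarith [Finset.sum_nonneg fun j (_ : j ∈ range n) => hnonneg j ω]
  have hmgf : mgf (∑ j ∈ range n, Y j) μ (-t) = mgf X μ (-t) ^ n := by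
    rw [hindep.mgf_sum hmeas, Finset.prod_congr rfl fun j _ =>
      congrFun (mgf_congr_identDistrib (hident j)) (-t), prod_const, card_range]
  calc μ.real {ω | ∑ j ∈ range n, Y j ω ≤ a * n}
      = μ.real {ω | (∑ j ∈ range n, Y j) ω ≤ a * n} := by simp only [Finset.sum_apply]
    _ ≤ exp (-(-t) * (a * n)) * mgf (∑ j ∈ range n, Y j) μ (-t) :=
        measure_le_le_exp_mul_mgf _ (by linarith) hint
    _ = (exp (t * a) * mgf X μ (-t)) ^ n := by
        rw [hmgf, mul_pow, ← exp_nat_mul]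
        ring_nf

lemma ae_eventually_forall_lt_row_sum {X : ℕ → ℕ → Ω → ℝ}
    (hnonneg : ∀ i j ω, 0 ≤ X i j ω) (hmeas : ∀ i j, Measurable (X i j))
    (hindep : iIndepFun (fun p : ℕ × ℕ => X p.1 p.2) μ)
    (hident : ∀ i j, IdentDistrib (X i j) (X 0 0) μ μ) (hL2 : MemLp (X 0 0) 2 μ)
    (hmean : ∫ ω, X 0 0 ω ∂μ = 1) {ε : ℝ} (hε : 0 < ε) :
    ∀ᵐ ω ∂μ, ∀ᶠ n in atTop, ∀ i < n, (1 - ε) * n < ∑ j ∈ range n, X i j ω := by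
  have := hindep.isProbabilityMeasure
  obtain ⟨t, ht, hr⟩ := exists_exp_mul_mgf_neg_lt_one (hnonneg 0 0) hL2 hmean hε
  set r := exp (t * (1 - ε)) * mgf (X 0 0) μ (-t)
  have hr0 : 0 ≤ r := mul_nonneg (exp_pos _).le mgf_nonneg
  set bad : ℕ → Set Ω := fun n => ⋃ i ∈ range n, {ω | ∑ j ∈ range n, X i j ω ≤ (1 - ε) * n}
  have hbad (n : ℕ) : μ (bad n) ≤ ENNReal.ofReal (n * r ^ n) := calc
    μ (bad n) ≤ ∑ i ∈ range n, μ {ω | ∑ j ∈ range n, X i j ω ≤ (1 - ε) * n} :=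
        measure_biUnion_finset_le _ _
    _ ≤ ∑ i ∈ range n, ENNReal.ofReal (r ^ n) := by
        gcongr with i
        rw [← ofReal_measureReal]
        exact ENNReal.ofReal_le_ofReal <| measureReal_sum_range_le_le_pow
          (hindep.precomp (g := fun j => (i, j)) fun a b h => (Prod.mk.inj h).2) (hmeas i)
          (hnonneg i) (hident i) ht.le _ n
    _ = ENNReal.ofReal (n * r ^ n) := by
        rw [sum_const, card_range, nsmul_eq_mul, ENNReal.ofReal_mul (by positivity),
          ENNReal.ofReal_natCast]
  have hsummable : Summable fun n : ℕ => n * r ^ n := by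
    simpa using summable_pow_mul_geometric_of_norm_lt_one 1
      (by rwa [norm_of_nonneg hr0] : ‖r‖ < 1)
  have htsum : ∑' n, μ (bad n) ≠ ⊤ :=
    ne_top_of_le_ne_top (ENNReal.ofReal_tsum_of_nonneg (fun n => by positivity) hsummable ▸
      ENNReal.ofReal_ne_top) (ENNReal.tsum_le_tsum hbad)
  filter_upwards [ae_eventually_notMem htsum] with ω hω
  filter_upwards [hω] with n hn i hi
  by_contra! h
  exact hn (Set.mem_biUnion (mem_range.2 hi) h)

lemma ae_forall_eventually_le_row_sum {X : ℕ → ℕ → Ω → ℝ}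
    (hnonneg : ∀ i j ω, 0 ≤ X i j ω) (hmeas : ∀ i j, Measurable (X i j))
    (hindep : iIndepFun (fun p : ℕ × ℕ => X p.1 p.2) μ)
    (hident : ∀ i j, IdentDistrib (X i j) (X 0 0) μ μ) (hL2 : MemLp (X 0 0) 2 μ)
    (hmean : ∫ ω, X 0 0 ω ∂μ = 1) :
    ∀ᵐ ω ∂μ, ∀ ε > 0, ∀ᶠ n in atTop, ∀ i < n, (1 - ε) * n ≤ ∑ j ∈ range n, X i j ω := by
  have h := ae_all_iff.2 fun k : ℕ => ae_eventually_forall_lt_row_sum hnonneg hmeas hindep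
    hident hL2 hmean (ε := 1 / (k + 1)) (by positivity)
  filter_upwards [h] with ω hω ε hε
  obtain ⟨k, hk⟩ := exists_nat_one_div_lt hε
  filter_upwards [hω k] with n hn i hi
  exact le_trans (by gcongr) (hn i hi).le

lemma sum_div_sq_le_of_le_sum {x : ℕ → ℕ → ℝ} {n : ℕ} {a : ℝ} (ha : 0 < a)
    (hrow : ∀ i < n, a ≤ ∑ j ∈ range n, x i j) :
    ∑ i ∈ range n, (∑ j ∈ range n, x i j ^ 2) / (∑ j ∈ range n, x i j) ^ 2 ≤
      (∑ i ∈ range n, ∑ j ∈ range n, x i j ^ 2) / a ^ 2 := by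
  rw [Finset.sum_div]
  gcongr with i hi
  exact hrow i (mem_range.1 hi)

lemma limsup_sum_sq_div_sq_sum_le (x : ℕ → ℕ → ℝ) {C : ℝ}
    (hsq : Tendsto (fun n : ℕ => (∑ i ∈ range n, ∑ j ∈ range n, x i j ^ 2) / (n : ℝ) ^ 2)
      atTop (𝓝 C))
    (hrow : ∀ ε > 0, ∀ᶠ n : ℕ in atTop, ∀ i < n, (1 - ε) * n ≤ ∑ j ∈ range n, x i j) :
    limsup (fun n : ℕ => ∑ i : Fin n, (∑ j : Fin n, x i j ^ 2) / (∑ j : Fin n, x i j) ^ 2)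
      atTop ≤ C := by
  have hbound : ∀ ε ∈ Set.Ioo (0 : ℝ) 1, limsup (fun n : ℕ => ∑ i : Fin n,
      (∑ j : Fin n, x i j ^ 2) / (∑ j : Fin n, x i j) ^ 2) atTop ≤ (C + ε) / (1 - ε) ^ 2 := by
    rintro ε ⟨hε0, hε1⟩
    refine limsup_le_of_le (isCoboundedUnder_le_of_le atTop fun n => by positivity) ?_
    filter_upwards [hsq.eventually_le_const (lt_add_of_pos_right C hε0), hrow ε hε0,
      eventually_gt_atTop 0] with n hsqn hrown hn
    calc _ = ∑ i ∈ range n, (∑ j ∈ range n, x i j ^ 2) / (∑ j ∈ range n, x i j) ^ 2 := by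
          simp only [Finset.sum_range]
      _ ≤ (∑ i ∈ range n, ∑ j ∈ range n, x i j ^ 2) / ((1 - ε) * n) ^ 2 :=
          sum_div_sq_le_of_le_sum (by positivity) hrown
      _ ≤ (C + ε) * n ^ 2 / ((1 - ε) * n) ^ 2 := by
          gcongr
          exact (div_le_iff₀ (by positivity)).1 hsqn
      _ = (C + ε) / (1 - ε) ^ 2 := by field_simp
  have hcont : Tendsto (fun ε => (C + ε) / (1 - ε) ^ 2) (𝓝[>] 0) (𝓝 C) := by
    have : ContinuousAt (fun ε : ℝ => (C + ε) / (1 - ε) ^ 2) 0 := by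
      fun_prop (disch := norm_num)
    simpa using this.tendsto.mono_left nhdsWithin_le_nhds
  exact ge_of_tendsto hcont (Filter.mem_of_superset (Ioo_mem_nhdsGT one_pos) hbound)

theorem second_moment_bound_general
    (μ : Measure Ω) [IsProbabilityMeasure μ]
    (X : ℕ → ℕ → Ω → ℝ) (σ : ℝ)
    (h_nonneg : ∀ i j ω, 0 ≤ X i j ω)
    (h_meas : ∀ i j, Measurable (X i j))
    (h_indep : iIndepFun (fun p : ℕ × ℕ => X p.1 p.2) μ)
    (h_ident : ∀ i j, IdentDistrib (X i j) (X 0 0) μ μ)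
    (h_L2 : MemLp (X 0 0) 2 μ)
    (h_mean : ∫ ω, X 0 0 ω ∂μ = 1)
    (h_var : variance (X 0 0) μ = σ ^ 2) :
    ∀ᵐ ω ∂μ,
      limsup (fun n : ℕ => ∑ i : Fin n,
        (∑ j : Fin n, (X i j ω) ^ 2) / (∑ j : Fin n, X i j ω) ^ 2) atTop ≤ 1 + σ ^ 2 := by
  have hsecond : ∫ ω, X 0 0 ω ^ 2 ∂μ = 1 + σ ^ 2 := by
    have h := variance_eq_sub h_L2
    simp only [Pi.pow_apply, h_mean, h_var] at h
    linarith
  have hsq := strong_law_ae_square_array (fun i j ω => X i j ω ^ 2) h_L2.integrable_sq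
    (fun p q hpq => (h_indep.indepFun hpq).comp (measurable_id.pow_const 2)
      (measurable_id.pow_const 2))
    (fun i j => (h_ident i j).comp (measurable_id.pow_const 2))
  filter_upwards [hsq, ae_forall_eventually_le_row_sum h_nonneg h_meas h_indep h_ident h_L2
    h_mean] with ω hsqω hrowω
  exact limsup_sum_sq_div_sq_sum_le (fun i j => X i j ω) (hsecond ▸ hsqω) hrowω

/-- The second moment `ς_n` of the empirical singular value distribution of `√n M` satisfies
a.s. `limsup ς_n ≤ 1 + σ²`. -/
theorem second_moment_bound
    (μ : Measure Ω) [IsProbabilityMeasure μ]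
    (X : ℕ → ℕ → Ω → ℝ) (σ : ℝ) (hσ : 0 < σ)
    (h_nonneg : ∀ i j ω, 0 ≤ X i j ω)
    (h_meas : ∀ i j, Measurable (X i j))
    (h_indep : iIndepFun (fun p : ℕ × ℕ => X p.1 p.2) μ)
    (h_ident : ∀ i j, IdentDistrib (X i j) (X 0 0) μ μ)
    (h_L2 : MemLp (X 0 0) 2 μ)
    (h_mean : ∫ ω, X 0 0 ω ∂μ = 1)
    (h_var : variance (X 0 0) μ = σ ^ 2) :
    ∀ᵐ ω ∂μ,
      limsup (fun n : ℕ => ∑ i : Fin n,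
        (∑ j : Fin n, (X i j ω) ^ 2) / (∑ j : Fin n, X i j ω) ^ 2) atTop ≤ 1 + σ ^ 2 :=
  second_moment_bound_general μ X σ h_nonneg h_meas h_indep h_ident h_L2 h_mean h_var
end
end

section
/- Let (X_{i,j})_{i,j≥1} be an infinite array of i.i.d. nonnegative real random variables with mean E(X_{1,1}) = 1 and finite positive variance σ². Then for every z ∈ ℂ, almost surely lim_{t→∞} limsup_{n→∞} ∫_t^∞ log(s) dν_{√n M − zI}(ds) = 0; that is, the function 1_{[1,∞)} log(·) is uniformly integrable for the sequence (ν_{√n M − zI})_{n≥1}. -/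
open MeasureTheory ProbabilityTheory Filter Matrix Polynomial Topology
open scoped ENNReal

noncomputable section

variable {Ω : Type} [MeasurableSpace Ω]

/-!
Since `log s ≤ s² / t` for `s ≥ t ≥ 1`, the tail `∫_{[t,∞)} log dν_A` is at most
`t⁻¹ ∫ s² dν_A = (n t)⁻¹ ‖A‖_F²`, so it suffices that `n⁻¹ ‖√n M - z‖_F²` stays bounded almost
surely. Once every row sum exceeds `n / 2` we have `M i j ≤ 2 X i j / n`, which bounds this
quantity by `8 n⁻² ∑_{i,j<n} X i j² + 2 |z|²`. The double sum is `O(n²)` by the strong law of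
large numbers applied to the squares, and a Chernoff bound for the lower tail of a sum of
nonnegative variables with bounded second moments, together with Borel–Cantelli, shows that
almost surely all row sums eventually exceed `n / 2`.
-/

lemma Real.exp_neg_le_one_sub_add_sq_s10 {y : ℝ} (hy : 0 ≤ y) : Real.exp (-y) ≤ 1 - y + y ^ 2 := by
  have hpos : 0 < 1 + y := by linarith
  calc Real.exp (-y) = (Real.exp y)⁻¹ := Real.exp_neg y
    _ ≤ (1 + y)⁻¹ := inv_anti₀ hpos (by linarith [Real.add_one_le_exp y])
    _ ≤ 1 - y + y ^ 2 := by
      rw [inv_le_iff_one_le_mul₀ hpos]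
      nlinarith [pow_nonneg hy 3]

lemma Real.log_le_sq_div {s t : ℝ} (ht : 0 < t) (hts : t ≤ s) : Real.log s ≤ s ^ 2 / t := by
  have hs : 0 < s := ht.trans_le hts
  calc Real.log s ≤ s := (Real.log_le_sub_one_of_pos hs).trans (by linarith)
    _ ≤ s ^ 2 / t := by rw [le_div_iff₀ ht]; nlinarith

lemma tendsto_limsup_of_eventually_nonneg_le {α ι : Type*} {L : Filter α} {l : Filter ι}
    [l.NeBot] {f : α → ι → ℝ} {b : α → ℝ} (hb : Tendsto b L (𝓝 0))
    (hf : ∀ᶠ a in L, ∀ᶠ i in l, 0 ≤ f a i ∧ f a i ≤ b a) :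
    Tendsto (fun a => limsup (f a) l) L (𝓝 0) := by
  refine tendsto_of_tendsto_of_tendsto_of_le_of_le' tendsto_const_nhds hb ?_ ?_
  · filter_upwards [hf] with a ha
    exact le_limsup_of_frequently_le (ha.mono fun i h => h.1).frequently
      (isBoundedUnder_of_eventually_le (ha.mono fun i h => h.2))
  · filter_upwards [hf] with a ha
    exact limsup_le_of_le (isCoboundedUnder_le_of_eventually_le l (ha.mono fun i h => h.1))
      (ha.mono fun i h => h.2)

lemma setIntegral_Ici_log_le {ν : Measure ℝ} (hν : Integrable (fun s => s ^ 2) ν) {t : ℝ}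
    (ht : 1 ≤ t) : ∫ s in Set.Ici t, Real.log s ∂ν ≤ (∫ s, s ^ 2 ∂ν) / t := by
  have ht0 : 0 < t := one_pos.trans_le ht
  have hlog : ∀ s ∈ Set.Ici t, 0 ≤ Real.log s ∧ Real.log s ≤ s ^ 2 / t := fun s hs =>
    ⟨Real.log_nonneg (ht.trans hs), Real.log_le_sq_div ht0 hs⟩
  have hdom : IntegrableOn (fun s => s ^ 2 / t) (Set.Ici t) ν := (hν.div_const t).integrableOn
  have hint : IntegrableOn Real.log (Set.Ici t) ν := by
    refine hdom.mono' Real.measurable_log.aestronglyMeasurable ?_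
    filter_upwards [ae_restrict_mem measurableSet_Ici] with s hs
    rw [Real.norm_of_nonneg (hlog s hs).1]
    exact (hlog s hs).2
  calc ∫ s in Set.Ici t, Real.log s ∂ν ≤ ∫ s in Set.Ici t, s ^ 2 / t ∂ν :=
        setIntegral_mono_on hint hdom measurableSet_Ici fun s hs => (hlog s hs).2
    _ ≤ ∫ s, s ^ 2 / t ∂ν :=
        setIntegral_le_integral (hν.div_const t) (ae_of_all _ fun s => by positivity)
    _ = (∫ s, s ^ 2 ∂ν) / t := integral_div t _

section EmpiricalSingularValues

variable {n : ℕ} (A : Matrix (Fin n) (Fin n) ℂ)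

lemma integrable_empSV (f : ℝ → ℝ) : Integrable f (empSV A) := by
  rcases Nat.eq_zero_or_pos n with rfl | hn
  · simp [empSV]
  · exact (integrable_finsetSum_measure.2 fun i _ => integrable_dirac (by simp)).smul_measure
      (by simp [hn.ne'])

lemma integral_empSV (f : ℝ → ℝ) : ∫ s, f s ∂(empSV A) = (n : ℝ)⁻¹ * ∑ i, f (singVals A i) := by
  rw [empSV, integral_smul_measure,
    integral_finsetSum_measure fun i _ => integrable_dirac (by simp)]
  simp [integral_dirac]

lemma sum_sq_singVals : ∑ i, singVals A i ^ 2 = ∑ i, ∑ j, ‖A i j‖ ^ 2 := by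
  have hA := isHermitian_mul_conjTranspose_self A
  have htrace : (A * Aᴴ).trace = ((∑ i, ∑ j, ‖A i j‖ ^ 2 : ℝ) : ℂ) := by
    rw [Matrix.trace]
    push_cast
    refine Finset.sum_congr rfl fun i _ => ?_
    simp [Matrix.mul_apply, Complex.mul_conj, Complex.normSq_eq_norm_sq]
  have hsq : ∀ i, singVals A i ^ 2 = hA.eigenvalues i := fun i =>
    Real.sq_sqrt (eigenvalues_self_mul_conjTranspose_nonneg A i)
  simp_rw [hsq]
  have h := hA.trace_eq_sum_eigenvalues.symm.trans htrace
  rw [← RCLike.ofReal_sum] at h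
  exact RCLike.ofReal_injective h

lemma integral_sq_empSV : ∫ s, s ^ 2 ∂(empSV A) = (n : ℝ)⁻¹ * ∑ i, ∑ j, ‖A i j‖ ^ 2 := by
  rw [integral_empSV, sum_sq_singVals]

end EmpiricalSingularValues

theorem tendsto_limsup_setIntegral_Ici_log_empSV {A : ∀ n : ℕ, Matrix (Fin n) (Fin n) ℂ} {K : ℝ}
    (hA : ∀ᶠ n : ℕ in atTop, (n : ℝ)⁻¹ * ∑ i, ∑ j, ‖A n i j‖ ^ 2 ≤ K) :
    Tendsto (fun t : ℝ => limsup (fun n => ∫ s in Set.Ici t, Real.log s ∂(empSV (A n))) atTop)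
      atTop (𝓝 0) := by
  refine tendsto_limsup_of_eventually_nonneg_le (b := fun t => K / t)
    (tendsto_const_nhds.div_atTop tendsto_id) ?_
  filter_upwards [eventually_ge_atTop 1] with t ht
  filter_upwards [hA] with n hn
  refine ⟨setIntegral_nonneg measurableSet_Ici fun s hs => Real.log_nonneg (ht.trans hs), ?_⟩
  calc _ ≤ (∫ s, s ^ 2 ∂(empSV (A n))) / t := setIntegral_Ici_log_le (integrable_empSV _ _) ht
    _ ≤ K / t := by
      rw [integral_sq_empSV]
      exact div_le_div_of_nonneg_right hn (by linarith)

lemma sum_norm_sq_sub_smul_one_le {ι : Type*} [Fintype ι] [DecidableEq ι]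
    (A : Matrix ι ι ℂ) (z : ℂ) :
    ∑ i, ∑ j, ‖(A - z • 1) i j‖ ^ 2 ≤
      2 * ∑ i, ∑ j, ‖A i j‖ ^ 2 + 2 * Fintype.card ι * ‖z‖ ^ 2 := by
  have hdiag : ∑ i : ι, ∑ j : ι, ‖(z • 1 : Matrix ι ι ℂ) i j‖ ^ 2 = Fintype.card ι * ‖z‖ ^ 2 := by
    simp [Matrix.one_apply, apply_ite]
  calc ∑ i, ∑ j, ‖(A - z • 1) i j‖ ^ 2
      ≤ ∑ i, ∑ j, 2 * (‖A i j‖ ^ 2 + ‖(z • 1 : Matrix ι ι ℂ) i j‖ ^ 2) := by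
        gcongr with i _ j _
        exact (pow_le_pow_left₀ (norm_nonneg _) (norm_sub_le _ _) 2).trans add_sq_le
    _ = 2 * ∑ i, ∑ j, ‖A i j‖ ^ 2 + 2 * Fintype.card ι * ‖z‖ ^ 2 := by
        simp only [← Finset.mul_sum, Finset.sum_add_distrib, hdiag]
        ring

lemma sum_norm_sq_sqnM {Ω : Type} (X : ℕ → ℕ → Ω → ℝ) (n : ℕ) (ω : Ω) :
    ∑ i, ∑ j, ‖sqnM X n ω i j‖ ^ 2 = n * ∑ i, ∑ j, markov X n ω i j ^ 2 := by
  simp only [sqnM, markC, Matrix.smul_apply, Matrix.map_apply, smul_eq_mul, norm_mul,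
    Complex.norm_real, Real.norm_eq_abs, mul_pow, sq_abs, Finset.mul_sum,
    Real.sq_sqrt (Nat.cast_nonneg n)]

lemma markov_sq_le {Ω : Type} {X : ℕ → ℕ → Ω → ℝ} {n : ℕ} {ω : Ω} {c : ℝ} (hc : 0 < c) {i : Fin n}
    (hi : c < ∑ k : Fin n, X i k ω) (j : Fin n) :
    markov X n ω i j ^ 2 ≤ X i j ω ^ 2 / c ^ 2 := by
  rw [markov, Matrix.of_apply, if_pos (hc.trans hi), div_pow]
  gcongr

lemma sum_sq_markov_le {Ω : Type} {X : ℕ → ℕ → Ω → ℝ} {n : ℕ} {ω : Ω} {c : ℝ} (hc : 0 < c)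
    (hrow : ∀ i : Fin n, c < ∑ k : Fin n, X i k ω) :
    ∑ i, ∑ j, markov X n ω i j ^ 2 ≤ (∑ i : Fin n, ∑ j : Fin n, X i j ω ^ 2) / c ^ 2 := by
  simp only [Finset.sum_div]
  gcongr with i _ j _
  exact markov_sq_le hc (hrow i) j

lemma frobenius_sqnM_sub_smul_one_le {Ω : Type} {X : ℕ → ℕ → Ω → ℝ} {n : ℕ} {ω : Ω} (hn : 0 < n)
    (hrow : ∀ i : Fin n, (n : ℝ) / 2 < ∑ k : Fin n, X i k ω) {C : ℝ}
    (hX : ∑ i : Fin n, ∑ j : Fin n, X i j ω ^ 2 ≤ C * n ^ 2) (z : ℂ) :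
    (n : ℝ)⁻¹ * ∑ i, ∑ j, ‖(sqnM X n ω - z • 1) i j‖ ^ 2 ≤ 8 * C + 2 * ‖z‖ ^ 2 := by
  have hn' : (0 : ℝ) < n := Nat.cast_pos.2 hn
  have hM : ∑ i, ∑ j, markov X n ω i j ^ 2 ≤ 4 * C :=
    calc _ ≤ (∑ i : Fin n, ∑ j : Fin n, X i j ω ^ 2) / ((n : ℝ) / 2) ^ 2 :=
          sum_sq_markov_le (by positivity) hrow
      _ ≤ C * n ^ 2 / ((n : ℝ) / 2) ^ 2 := by gcongr
      _ = 4 * C := by field_simp; ring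
  have h := sum_norm_sq_sub_smul_one_le (sqnM X n ω) z
  rw [sum_norm_sq_sqnM, Fintype.card_fin] at h
  rw [inv_mul_le_iff₀ hn']
  nlinarith

lemma Nat.pair_lt_mul_self_iff {a b n : ℕ} : Nat.pair a b < n * n ↔ a < n ∧ b < n := by
  rw [← max_lt_iff, ← sq]
  constructor
  · intro h
    by_contra! hn
    have := Nat.max_sq_add_min_le_pair a b
    have := Nat.pow_le_pow_left hn 2
    omega
  · intro h
    exact (Nat.pair_lt_max_add_one_sq a b).trans_le (Nat.pow_le_pow_left h 2)

lemma Finset.sum_range_mul_self_unpair {M : Type*} [AddCommMonoid M] (f : ℕ → ℕ → M) (n : ℕ) :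
    ∑ k ∈ Finset.range (n * n), f (Nat.unpair k).1 (Nat.unpair k).2 =
      ∑ i ∈ Finset.range n, ∑ j ∈ Finset.range n, f i j := by
  rw [← Finset.sum_product']
  refine Finset.sum_nbij' Nat.unpair (fun p => Nat.pair p.1 p.2) (fun k hk => ?_) (fun p hp => ?_)
    (fun k _ => Nat.pair_unpair k) (fun p _ => Nat.unpair_pair p.1 p.2) (fun _ _ => rfl)
  · rw [Finset.mem_range, ← Nat.pair_unpair k, Nat.pair_lt_mul_self_iff] at hk
    simpa using hk
  · simpa [Nat.pair_lt_mul_self_iff] using hp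

section Moments

variable {Ω : Type*} [MeasurableSpace Ω] {μ : Measure Ω}

lemma integrable_exp_neg_mul_of_nonneg [IsFiniteMeasure μ] {Y : Ω → ℝ}
    (hY : AEStronglyMeasurable Y μ) (h_nonneg : ∀ ω, 0 ≤ Y ω) {s : ℝ} (hs : 0 ≤ s) :
    Integrable (fun ω => Real.exp (-s * Y ω)) μ := by
  refine (integrable_const (1 : ℝ)).mono'
    ((hY.aemeasurable.const_mul (-s)).exp.aestronglyMeasurable) (ae_of_all _ fun ω => ?_)
  rw [Real.norm_of_nonneg (Real.exp_pos _).le, Real.exp_le_one_iff]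
  nlinarith [h_nonneg ω]

lemma mgf_neg_le_exp [IsProbabilityMeasure μ] {Y : Ω → ℝ} (hY : MemLp Y 2 μ)
    (h_nonneg : ∀ ω, 0 ≤ Y ω) (h_mean : ∫ ω, Y ω ∂μ = 1) {m : ℝ} (hm : ∫ ω, Y ω ^ 2 ∂μ ≤ m)
    {s : ℝ} (hs : 0 ≤ s) :
    mgf Y μ (-s) ≤ Real.exp (-s + s ^ 2 * m) := by
  have hY1 : Integrable Y μ := hY.integrable one_le_two
  have hY2 : Integrable (fun ω => Y ω ^ 2) μ := hY.integrable_sq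
  have hquad : Integrable (fun ω => 1 - s * Y ω + s ^ 2 * Y ω ^ 2) μ :=
    ((integrable_const 1).sub (hY1.const_mul s)).add (hY2.const_mul (s ^ 2))
  calc mgf Y μ (-s) ≤ ∫ ω, (1 - s * Y ω + s ^ 2 * Y ω ^ 2) ∂μ := by
        refine integral_mono (integrable_exp_neg_mul_of_nonneg hY.1 h_nonneg hs) hquad
          fun ω => ?_
        have h := Real.exp_neg_le_one_sub_add_sq_s10 (mul_nonneg hs (h_nonneg ω))
        rw [neg_mul]
        linarith
    _ = 1 - s + s ^ 2 * ∫ ω, Y ω ^ 2 ∂μ := by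
        rw [integral_add ?_ (hY2.const_mul _),
          integral_sub (integrable_const 1) (hY1.const_mul s), integral_const_mul,
          integral_const_mul, h_mean]
        · simp
        · exact (integrable_const 1).sub (hY1.const_mul s)
    _ ≤ 1 + (-s + s ^ 2 * m) := by nlinarith [sq_nonneg s]
    _ ≤ Real.exp (-s + s ^ 2 * m) := by linarith [Real.add_one_le_exp (-s + s ^ 2 * m)]

lemma measureReal_sum_le_half_card_le [IsProbabilityMeasure μ] {ι : Type*} [Fintype ι]
    {Y : ι → Ω → ℝ} (h_indep : iIndepFun Y μ) (h_meas : ∀ i, Measurable (Y i))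
    (hY : ∀ i, MemLp (Y i) 2 μ) (h_nonneg : ∀ i ω, 0 ≤ Y i ω)
    (h_mean : ∀ i, ∫ ω, Y i ω ∂μ = 1) {m : ℝ} (hm0 : 0 < m) (hm : ∀ i, ∫ ω, Y i ω ^ 2 ∂μ ≤ m) :
    μ.real {ω | ∑ i, Y i ω ≤ Fintype.card ι / 2} ≤
      Real.exp (-(16 * m)⁻¹ * Fintype.card ι) := by
  -- `s = 1 / (4 m)` minimizes the exponent `s N / 2 + N (-s + s² m)` of the Chernoff bound
  set s : ℝ := (4 * m)⁻¹
  have hs : 0 ≤ s := by positivity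
  have hint : Integrable (fun ω => Real.exp (-s * (∑ i, Y i) ω)) μ :=
    h_indep.integrable_exp_mul_sum h_meas fun i _ =>
      integrable_exp_neg_mul_of_nonneg (h_meas i).aestronglyMeasurable (h_nonneg i) hs
  have hmgf : mgf (∑ i, Y i) μ (-s) ≤ Real.exp (-s + s ^ 2 * m) ^ Fintype.card ι := by
    rw [h_indep.mgf_sum h_meas, ← Finset.card_univ, ← Finset.prod_const]
    exact Finset.prod_le_prod (fun i _ => mgf_nonneg) fun i _ =>
      mgf_neg_le_exp (hY i) (h_nonneg i) (h_mean i) (hm i) hs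
  have hset : {ω | ∑ i, Y i ω ≤ Fintype.card ι / 2} = {ω | (∑ i, Y i) ω ≤ Fintype.card ι / 2} := by
    simp only [Finset.sum_apply]
  calc μ.real {ω | ∑ i, Y i ω ≤ Fintype.card ι / 2}
      ≤ Real.exp (- -s * (Fintype.card ι / 2)) * mgf (∑ i, Y i) μ (-s) :=
        hset ▸ measure_le_le_exp_mul_mgf _ (neg_nonpos.2 hs) hint
    _ ≤ Real.exp (- -s * (Fintype.card ι / 2)) * Real.exp (-s + s ^ 2 * m) ^ Fintype.card ι := by
        gcongr
    _ = Real.exp (-(16 * m)⁻¹ * Fintype.card ι) := by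
        rw [← Real.exp_nat_mul, ← Real.exp_add]
        congr 1
        simp only [s]
        field_simp
        ring

end Moments

section IIDArray

variable {Ω : Type*} [MeasurableSpace Ω] {μ : Measure Ω} {X : ℕ → ℕ → Ω → ℝ}

lemma measure_rowSum_le_half_le [IsProbabilityMeasure μ] (h_nonneg : ∀ i j ω, 0 ≤ X i j ω)
    (h_meas : ∀ i j, Measurable (X i j)) (h_indep : iIndepFun (fun p : ℕ × ℕ => X p.1 p.2) μ)
    (h_ident : ∀ i j, IdentDistrib (X i j) (X 0 0) μ μ) (h_L2 : MemLp (X 0 0) 2 μ)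
    (h_mean : ∫ ω, X 0 0 ω ∂μ = 1) {m : ℝ} (hm : ∫ ω, X 0 0 ω ^ 2 ∂μ < m) (n : ℕ) (i : Fin n) :
    μ {ω | ∑ k : Fin n, X i k ω ≤ (n : ℝ) / 2} ≤ ENNReal.ofReal (Real.exp (-(16 * m)⁻¹ * n)) := by
  have hm0 : 0 < m := (integral_nonneg fun ω => sq_nonneg (X 0 0 ω)).trans_lt hm
  have hinj : Function.Injective fun k : Fin n => ((i : ℕ), (k : ℕ)) :=
    fun k l hkl => Fin.val_injective (Prod.ext_iff.1 hkl).2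
  have h := measureReal_sum_le_half_card_le (μ := μ) (Y := fun k : Fin n => X i k)
    (h_indep.precomp hinj) (fun k => h_meas _ _) (fun k => (h_ident _ _).memLp_iff.2 h_L2)
    (fun k => h_nonneg _ _) (fun k => (h_ident _ _).integral_eq.trans h_mean) hm0
    (fun k => ((h_ident _ _).comp (measurable_id.pow_const 2)).integral_eq.trans_le hm.le)
  rw [Fintype.card_fin] at h
  exact (ENNReal.le_ofReal_iff_toReal_le (measure_ne_top _ _) (by positivity)).2 h

lemma ae_eventually_forall_rowSum_gt_half [IsProbabilityMeasure μ]
    (h_nonneg : ∀ i j ω, 0 ≤ X i j ω) (h_meas : ∀ i j, Measurable (X i j))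
    (h_indep : iIndepFun (fun p : ℕ × ℕ => X p.1 p.2) μ)
    (h_ident : ∀ i j, IdentDistrib (X i j) (X 0 0) μ μ) (h_L2 : MemLp (X 0 0) 2 μ)
    (h_mean : ∫ ω, X 0 0 ω ∂μ = 1) :
    ∀ᵐ ω ∂μ, ∀ᶠ n in atTop, ∀ i : Fin n, (n : ℝ) / 2 < ∑ k : Fin n, X i k ω := by
  set m : ℝ := ∫ ω, X 0 0 ω ^ 2 ∂μ + 1
  have hm0 : 0 < m := (integral_nonneg fun ω => sq_nonneg (X 0 0 ω)).trans_lt (lt_add_one _)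
  set E : ℕ → Set Ω := fun n => ⋃ i : Fin n, {ω | ∑ k : Fin n, X i k ω ≤ (n : ℝ) / 2}
  have hE : ∀ n, μ (E n) ≤ ENNReal.ofReal (n ^ 1 * Real.exp (-(16 * m)⁻¹ * n)) := fun n =>
    calc μ (E n) ≤ ∑ i : Fin n, μ {ω | ∑ k : Fin n, X i k ω ≤ (n : ℝ) / 2} :=
          measure_iUnion_fintype_le μ _
      _ ≤ ∑ _i : Fin n, ENNReal.ofReal (Real.exp (-(16 * m)⁻¹ * n)) :=
          Finset.sum_le_sum fun i _ => measure_rowSum_le_half_le h_nonneg h_meas h_indep h_ident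
            h_L2 h_mean (lt_add_one _) n i
      _ = ENNReal.ofReal (n ^ 1 * Real.exp (-(16 * m)⁻¹ * n)) := by
          rw [Finset.sum_const, Finset.card_univ, Fintype.card_fin, nsmul_eq_mul, pow_one,
            ENNReal.ofReal_mul (Nat.cast_nonneg n), ENNReal.ofReal_natCast]
  have hsum : ∑' n, μ (E n) ≤ ENNReal.ofReal (∑' n : ℕ, n ^ 1 * Real.exp (-(16 * m)⁻¹ * n)) :=
    (ENNReal.tsum_le_tsum hE).trans_eq (ENNReal.ofReal_tsum_of_nonneg (fun n => by positivity)
      (Real.summable_pow_mul_exp_neg_nat_mul 1 (by positivity))).symm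
  filter_upwards [ae_eventually_notMem (ne_top_of_le_ne_top ENNReal.ofReal_ne_top hsum)] with ω hω
  filter_upwards [hω] with n hn
  simpa [E] using hn

lemma ae_eventually_sum_sq_le (h_indep : iIndepFun (fun p : ℕ × ℕ => X p.1 p.2) μ)
    (h_ident : ∀ i j, IdentDistrib (X i j) (X 0 0) μ μ) (h_L2 : MemLp (X 0 0) 2 μ) {C : ℝ}
    (hC : ∫ ω, X 0 0 ω ^ 2 ∂μ < C) :
    ∀ᵐ ω ∂μ, ∀ᶠ n : ℕ in atTop, ∑ i : Fin n, ∑ j : Fin n, X i j ω ^ 2 ≤ C * n ^ 2 := by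
  -- the strong law for the squares enumerated along `Nat.unpair`, whose first `n * n` terms
  -- fill the `n × n` corner of the array
  set Y : ℕ → Ω → ℝ := fun k ω => X (Nat.unpair k).1 (Nat.unpair k).2 ω ^ 2
  have hsq : Measurable fun x : ℝ => x ^ 2 := measurable_id.pow_const 2
  have hY0 : Y 0 = fun ω => X 0 0 ω ^ 2 := by simp [Y]
  have hindep : Pairwise fun k l => IndepFun (Y k) (Y l) μ := fun k l hkl =>
    (h_indep.indepFun (Nat.pairEquiv.symm.injective.ne hkl)).comp hsq hsq
  have hSLLN := strong_law_ae_real Y (hY0 ▸ h_L2.integrable_sq) hindep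
    fun k => hY0 ▸ (h_ident _ _).comp hsq
  rw [hY0] at hSLLN
  filter_upwards [hSLLN] with ω hω
  have hsquares := hω.comp (tendsto_atTop_mono Nat.le_mul_self tendsto_id)
  filter_upwards [hsquares.eventually_lt_const hC, eventually_gt_atTop 0] with n hn hn0
  change (∑ k ∈ Finset.range (n * n), Y k ω) / ((n * n : ℕ) : ℝ) < C at hn
  rw [Finset.sum_range_mul_self_unpair (fun i j => X i j ω ^ 2),
    div_lt_iff₀ (by positivity)] at hn
  rw [Fin.sum_univ_eq_sum_range (fun i => ∑ j : Fin n, X i j ω ^ 2),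
    Finset.sum_congr rfl fun i _ => Fin.sum_univ_eq_sum_range (fun j => X i j ω ^ 2) n]
  push_cast at hn
  nlinarith

end IIDArray

theorem log_uniform_integrability_at_infinity_general
    (μ : Measure Ω) [IsProbabilityMeasure μ]
    (X : ℕ → ℕ → Ω → ℝ)
    (h_nonneg : ∀ i j ω, 0 ≤ X i j ω)
    (h_meas : ∀ i j, Measurable (X i j))
    (h_indep : iIndepFun (fun p : ℕ × ℕ => X p.1 p.2) μ)
    (h_ident : ∀ i j, IdentDistrib (X i j) (X 0 0) μ μ)
    (h_L2 : MemLp (X 0 0) 2 μ)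
    (h_mean : ∫ ω, X 0 0 ω ∂μ = 1) :
    ∀ z : ℂ, ∀ᵐ ω ∂μ,
      Tendsto (fun t : ℝ =>
          limsup (fun n : ℕ =>
            ∫ s in Set.Ici t, Real.log s ∂(empSV (sqnM X n ω - z • 1))) atTop)
        atTop (𝓝 0) := by
  intro z
  set C : ℝ := ∫ ω, X 0 0 ω ^ 2 ∂μ + 1
  filter_upwards [ae_eventually_forall_rowSum_gt_half h_nonneg h_meas h_indep h_ident h_L2 h_mean,
    ae_eventually_sum_sq_le h_indep h_ident h_L2 (lt_add_one _)] with ω hrow hsq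
  refine tendsto_limsup_setIntegral_Ici_log_empSV (K := 8 * C + 2 * ‖z‖ ^ 2) ?_
  filter_upwards [hrow, hsq, eventually_gt_atTop 0] with n hrow_n hsq_n hn
  exact frobenius_sqnM_sub_smul_one_le hn hrow_n hsq_n z

/-- For every `z`, a.s. `lim_{t→∞} limsup_n ∫_t^∞ log s dν_{√n M − zI}(ds) = 0`, i.e.
`1_{[1,∞)} log` is uniformly integrable for the empirical singular value distributions. -/
theorem log_uniform_integrability_at_infinity
    (μ : Measure Ω) [IsProbabilityMeasure μ]
    (X : ℕ → ℕ → Ω → ℝ) (σ : ℝ) (hσ : 0 < σ)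
    (h_nonneg : ∀ i j ω, 0 ≤ X i j ω)
    (h_meas : ∀ i j, Measurable (X i j))
    (h_indep : iIndepFun (fun p : ℕ × ℕ => X p.1 p.2) μ)
    (h_ident : ∀ i j, IdentDistrib (X i j) (X 0 0) μ μ)
    (h_L2 : MemLp (X 0 0) 2 μ)
    (h_mean : ∫ ω, X 0 0 ω ∂μ = 1)
    (h_var : variance (X 0 0) μ = σ ^ 2) :
    ∀ z : ℂ, ∀ᵐ ω ∂μ,
      Tendsto (fun t : ℝ =>
          limsup (fun n : ℕ =>
            ∫ s in Set.Ici t, Real.log s ∂(empSV (sqnM X n ω - z • 1))) atTop)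
        atTop (𝓝 0) :=
  log_uniform_integrability_at_infinity_general μ X h_nonneg h_meas h_indep h_ident h_L2 h_mean
end
end
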